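/- For all x > 0, Dawson's integral satisfies 0 < D(x), and for all x ≥ 1, D(x) ≤ 1/(2x) + 1/(2x³); in particular D(x) → 0 as x → ∞. -/

import Mathlib

/-!
Dawson's function `D` solves `D' = 1 - 2 x D` with `D 0 = 0`. If `h' ≥ 1 - 2 x h` on `[a, b]`
and `D a ≤ h a`, then `exp (x ^ 2) * (h x - D x)` is nondecreasing there, so `D ≤ h` on `[a, b]`.
The bound `1 / (2 x) + 1 / (2 x ^ 3)` is such a supersolution only for `x ≥ √3`; on `[0, √3]` the
rational function `5 x / (5 + 3 x ^ 2 + x ^ 4)` is one, and it lies below the bound on `[1, √3]`.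
-/

open Filter Topology Real Set

noncomputable def dawson (x : ℝ) : ℝ := exp (-x ^ 2) * ∫ t in (0:ℝ)..x, exp (t ^ 2)

lemma continuous_exp_sq : Continuous fun t : ℝ => exp (t ^ 2) := by fun_prop

lemma dawson_zero : dawson 0 = 0 := by simp [dawson]

lemma dawson_pos {x : ℝ} (hx : 0 < x) : 0 < dawson x :=
  mul_pos (exp_pos _) <|
    intervalIntegral.intervalIntegral_pos_of_pos (continuous_exp_sq.intervalIntegrable _ _)
      (fun _ => exp_pos _) hx

lemma exp_sq_mul_dawson (x : ℝ) : exp (x ^ 2) * dawson x = ∫ t in (0:ℝ)..x, exp (t ^ 2) := by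
  rw [dawson, ← mul_assoc, ← exp_add, add_neg_cancel, exp_zero, one_mul]

lemma dawson_le_of_supersolution {h h' : ℝ → ℝ} {a b : ℝ}
    (hh : ∀ x ∈ Icc a b, HasDerivAt h (h' x) x)
    (hsup : ∀ x ∈ Ioo a b, 1 ≤ 2 * x * h x + h' x)
    (ha : dawson a ≤ h a) {x : ℝ} (hx : x ∈ Icc a b) : dawson x ≤ h x := by
  set E : ℝ → ℝ := fun y => exp (y ^ 2) * h y - ∫ t in (0:ℝ)..y, exp (t ^ 2)
  have hE : ∀ y ∈ Icc a b, HasDerivAt E (exp (y ^ 2) * (2 * y * h y + h' y - 1)) y := by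
    intro y hy
    refine ((((hasDerivAt_pow 2 y).exp).mul (hh y hy)).sub
      (continuous_exp_sq.integral_hasStrictDerivAt 0 y).hasDerivAt).congr_deriv ?_
    push_cast
    ring
  have hmono : MonotoneOn E (Icc a b) := by
    refine monotoneOn_of_hasDerivWithinAt_nonneg (convex_Icc a b)
      (fun y hy => (hE y hy).continuousAt.continuousWithinAt)
      (fun y hy => (hE y (interior_subset hy)).hasDerivWithinAt) fun y hy => ?_
    rw [interior_Icc] at hy
    have := hsup y hy
    have := exp_pos (y ^ 2)
    nlinarith
  have hle_iff : ∀ y, dawson y ≤ h y ↔ 0 ≤ E y := fun y => by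
    rw [sub_nonneg, ← exp_sq_mul_dawson, mul_le_mul_iff_right₀ (exp_pos _)]
  rw [hle_iff] at ha ⊢
  exact ha.trans (hmono (left_mem_Icc.2 (hx.1.trans hx.2)) hx hx.1)

lemma dawson_le_five_mul_div {x : ℝ} (hx₀ : 0 ≤ x) (hx : x ≤ √3) :
    dawson x ≤ 5 * x / (5 + 3 * x ^ 2 + x ^ 4) := by
  have hq : ∀ y : ℝ, 0 < 5 + 3 * y ^ 2 + y ^ 4 := fun y => by positivity
  refine dawson_le_of_supersolution (a := 0) (b := √3)
    (h := fun y => 5 * y / (5 + 3 * y ^ 2 + y ^ 4))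
    (h' := fun y => 5 * (5 - 3 * y ^ 2 - 3 * y ^ 4) / (5 + 3 * y ^ 2 + y ^ 4) ^ 2)
    (fun y _ => ?_) (fun y hy => ?_) (by simp [dawson_zero]) ⟨hx₀, hx⟩
  · have hq' : HasDerivAt (fun y : ℝ => 5 + 3 * y ^ 2 + y ^ 4) (6 * y + 4 * y ^ 3) y :=
      ((((hasDerivAt_pow 2 y).const_mul 3).const_add 5).add (hasDerivAt_pow 4 y)).congr_deriv
        (by push_cast; ring)
    refine (((hasDerivAt_id' y).const_mul 5).div hq' (hq y).ne').congr_deriv ?_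
    field_simp
    ring
  · have hy3 : y ^ 2 ≤ 3 := (le_sqrt hy.1.le (by norm_num)).1 hy.2.le
    -- the numerator `5 - 4u + 4u² - u³` (with `u = y²`) is `(u - 2)² + 1 + u²(3 - u)`
    have key : 2 * y * (5 * y / (5 + 3 * y ^ 2 + y ^ 4)) +
        5 * (5 - 3 * y ^ 2 - 3 * y ^ 4) / (5 + 3 * y ^ 2 + y ^ 4) ^ 2 - 1 =
        y ^ 2 * ((y ^ 2 - 2) ^ 2 + 1 + y ^ 4 * (3 - y ^ 2)) / (5 + 3 * y ^ 2 + y ^ 4) ^ 2 := by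
      field_simp
      ring
    have h3 : 0 ≤ 3 - y ^ 2 := by linarith
    have : 0 ≤ y ^ 2 * ((y ^ 2 - 2) ^ 2 + 1 + y ^ 4 * (3 - y ^ 2)) /
        (5 + 3 * y ^ 2 + y ^ 4) ^ 2 := by positivity
    linarith

lemma hasDerivAt_dawson_bound {x : ℝ} (hx : x ≠ 0) :
    HasDerivAt (fun y => 1 / (2 * y) + 1 / (2 * y ^ 3)) (-1 / (2 * x ^ 2) - 3 / (2 * x ^ 4)) x := by
  refine (((hasDerivAt_const x 1).div ((hasDerivAt_id' x).const_mul 2) (by simpa using hx)).add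
    ((hasDerivAt_const x 1).div ((hasDerivAt_pow 3 x).const_mul 2) (by positivity))).congr_deriv ?_
  field_simp
  ring

lemma dawson_le_of_one_le_of_le_sqrt_three {x : ℝ} (hx₁ : 1 ≤ x) (hx : x ≤ √3) :
    dawson x ≤ 1 / (2 * x) + 1 / (2 * x ^ 3) := by
  refine (dawson_le_five_mul_div (by linarith) hx).trans ?_
  have hx0 : 0 < x := by linarith
  have hx3 : x ^ 2 ≤ 3 := (le_sqrt hx0.le (by norm_num)).1 hx
  -- cleared of denominators: `u ^ 3 - 6 u ^ 2 + 8 u + 5 ≥ 0` for `u = x ^ 2 ≤ 3`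
  rw [div_add_div _ _ (by positivity) (by positivity),
    div_le_div_iff₀ (by positivity) (by positivity)]
  nlinarith [mul_nonneg (mul_nonneg hx0.le hx0.le) (sub_nonneg.2 hx3), sq_nonneg (x ^ 2 - 2)]

lemma dawson_le_of_one_le {x : ℝ} (hx : 1 ≤ x) : dawson x ≤ 1 / (2 * x) + 1 / (2 * x ^ 3) := by
  have h13 : 1 ≤ √3 := one_le_sqrt.2 (by norm_num)
  rcases le_total x √3 with hx3 | hx3
  · exact dawson_le_of_one_le_of_le_sqrt_three hx hx3
  refine dawson_le_of_supersolution (fun y hy => hasDerivAt_dawson_bound (by linarith [hy.1]))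
    (fun y hy => ?_) (dawson_le_of_one_le_of_le_sqrt_three h13 le_rfl) ⟨hx3, le_rfl⟩
  have hy0 : 0 < y := by linarith [hy.1]
  have hy3 : 3 ≤ y ^ 2 := (sqrt_le_left hy0.le).1 hy.1.le
  have key : 2 * y * (1 / (2 * y) + 1 / (2 * y ^ 3)) + (-1 / (2 * y ^ 2) - 3 / (2 * y ^ 4)) =
      1 + (y ^ 2 - 3) / (2 * y ^ 4) := by
    field_simp
    ring
  rw [key, le_add_iff_nonneg_right]
  have : 0 ≤ y ^ 2 - 3 := by linarith
  positivity

lemma tendsto_dawson_atTop : Tendsto dawson atTop (𝓝 0) := by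
  have h2 : (0:ℝ) < 2 := two_pos
  have hbound : Tendsto (fun x : ℝ => 1 / (2 * x) + 1 / (2 * x ^ 3)) atTop (𝓝 (0 + 0)) :=
    (tendsto_const_nhds.div_atTop (tendsto_id.const_mul_atTop h2)).add
      (tendsto_const_nhds.div_atTop ((tendsto_pow_atTop three_ne_zero).const_mul_atTop h2))
  rw [add_zero] at hbound
  exact tendsto_of_tendsto_of_tendsto_of_le_of_le' tendsto_const_nhds hbound
    ((eventually_gt_atTop 0).mono fun x hx => (dawson_pos hx).le)
    ((eventually_ge_atTop 1).mono fun x hx => dawson_le_of_one_le hx)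

theorem dawson_pos_bound_limit :
    (∀ x : ℝ, 0 < x → 0 < Real.exp (-x ^ 2) * ∫ t in (0:ℝ)..x, Real.exp (t ^ 2)) ∧
    (∀ x : ℝ, 1 ≤ x →
      Real.exp (-x ^ 2) * (∫ t in (0:ℝ)..x, Real.exp (t ^ 2)) ≤
        1 / (2 * x) + 1 / (2 * x ^ 3)) ∧
    Tendsto (fun x : ℝ => Real.exp (-x ^ 2) * ∫ t in (0:ℝ)..x, Real.exp (t ^ 2))
      atTop (𝓝 0) :=
  ⟨fun _ => dawson_pos, fun _ => dawson_le_of_one_le, tendsto_dawson_atTop⟩
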